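/- Let w ∈ S_n be a prism with a letter i ∈ supp(w) unconfined in every reduced word of w, and suppose both i−1 ∈ supp(w) and i+1 ∈ supp(w). Then at least one of the following holds (these are the one-line-notation renderings of the four calibrated mesh patterns of the proposition): (a) w(i) < i, w(i+1) = i, and {w(1),…,w(i+1)} = {1,…,i} ∪ {y} for some y > i+1; (b) w(i) = i+1, w(i+1) > i+1, and {w(1),…,w(i−1)} = {1,…,i} \ {a} for some a ≤ i−1; (c) w(i) < i, w(i+1) > i+1, and {w(1),…,w(i−1)} = ({1,…,i−1} \ {w(i)}) ∪ {i+1}; (d) w(i) > i+1, w(i+1) < i, and {w(1),…,w(i−1)} = ({1,…,i−1} \ {w(i+1)}) ∪ {i}. -/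

import Mathlib

/-!
A reduced word of `w` has the form `a ++ i :: b` with `i` in neither `a` nor `b`. By the
deletion property, a permutation mapping `{0, …, j}` onto itself has no reduced word containing
`j`; so `i - 1` and `i + 1` occur in every reduced word, and unconfinedness puts each of them on
exactly one side of `i`. Write `w = A σ_i B` with `A`, `B` the products of `a`, `b`. A factor
fixes the cut at each neighbour of `i` it avoids, pushes `i` down if it contains `i - 1`, and
pushes `i + 1` up if it contains `i + 1`; the four placements of the neighbours give the four
patterns.
-/

/-- The adjacent transposition `σ_i`, swapping `i` and `i+1` (acting on `ℕ`). -/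
def sigmaT (i : ℕ) : Equiv.Perm ℕ := Equiv.swap i (i + 1)

/-- The permutation given by a word (product of simple reflections, composed as functions). -/
def wordProd (s : List ℕ) : Equiv.Perm ℕ := (s.map sigmaT).prod

/-- `s` is a word for `w` in `S_n`: all letters lie in `{1,…,n-1}` and the product is `w`. -/
def IsWord (n : ℕ) (w : Equiv.Perm ℕ) (s : List ℕ) : Prop :=
  (∀ j ∈ s, 1 ≤ j ∧ j ≤ n - 1) ∧ wordProd s = w

/-- `s` is a reduced word for `w`: a word of minimal length. -/
def IsReducedWord (n : ℕ) (w : Equiv.Perm ℕ) (s : List ℕ) : Prop :=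
  IsWord n w s ∧ ∀ t : List ℕ, IsWord n w t → s.length ≤ t.length

/-- The Coxeter length `ℓ(w)`. -/
noncomputable def ell (n : ℕ) (w : Equiv.Perm ℕ) : ℕ :=
  sInf {k | ∃ s : List ℕ, IsWord n w s ∧ s.length = k}

/-- The support of `w`: letters appearing in reduced words of `w`. -/
def supp (n : ℕ) (w : Equiv.Perm ℕ) : Set ℕ :=
  {i | ∃ s : List ℕ, IsReducedWord n w s ∧ i ∈ s}

/-- Bruhat order: some reduced word of `v` is a subsequence of some reduced word of `w`. -/
def BruhatLE (n : ℕ) (v w : Equiv.Perm ℕ) : Prop :=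
  ∃ s t : List ℕ, IsReducedWord n v s ∧ IsReducedWord n w t ∧ s.Sublist t

/-- The principal order ideal `B(w)`, as a type. -/
def IdealB (n : ℕ) (w : Equiv.Perm ℕ) : Type := {v : Equiv.Perm ℕ // BruhatLE n v w}

/-- The Bruhat order restricted to `B(w)`. -/
def IdealLE (n : ℕ) (w : Equiv.Perm ℕ) (a b : IdealB n w) : Prop := BruhatLE n a.1 b.1

/-- Two relations are isomorphic (order isomorphism of the corresponding ordered sets). -/
def RelIsomorphic {α β : Type*} (ra : α → α → Prop) (rb : β → β → Prop) : Prop :=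
  ∃ e : α ≃ β, ∀ a b : α, ra a b ↔ rb (e a) (e b)

/-- `w` is a prism: `B(w) ≅ C₂ × X` for some partially ordered set `X`
(the two-element chain `C₂` realized as `Bool`), with the componentwise order. -/
def IsPrism (n : ℕ) (w : Equiv.Perm ℕ) : Prop :=
  ∃ (X : Type) (rX : X → X → Prop), IsPartialOrder X rX ∧
    RelIsomorphic (IdealLE n w)
      (fun p q : Bool × X => (p.1 ≤ q.1) ∧ rX p.2 q.2)

/-- `w` belongs to `S_n`: it fixes every point outside `{1,…,n}`. -/
def MemSymm (n : ℕ) (w : Equiv.Perm ℕ) : Prop :=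
  ∀ x : ℕ, x ∉ Set.Icc 1 n → w x = x

/-- `i` is unconfined in the word `s`: it appears exactly once, not between two copies
of `i+1` and not between two copies of `i-1`. -/
def Unconfined (i : ℕ) (s : List ℕ) : Prop :=
  s.count i = 1 ∧ ∀ a b : List ℕ, s = a ++ i :: b →
    ¬((i + 1) ∈ a ∧ (i + 1) ∈ b) ∧ ¬((i - 1) ∈ a ∧ (i - 1) ∈ b)

/-- `B(w) ≅ C₂ × B(v)` with the componentwise order. -/
def IsoC2TimesIdeal (n : ℕ) (w v : Equiv.Perm ℕ) : Prop :=
  RelIsomorphic (IdealLE n w)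
    (fun p q : Bool × IdealB n v => (p.1 ≤ q.1) ∧ IdealLE n v p.2 q.2)

lemma wordProd_cons (x : ℕ) (s : List ℕ) : wordProd (x :: s) = sigmaT x * wordProd s := by
  simp [wordProd]

lemma wordProd_append (s t : List ℕ) : wordProd (s ++ t) = wordProd s * wordProd t := by
  simp [wordProd]

lemma exists_eq_append_cons_of_count_eq_one {α : Type*} [BEq α] [LawfulBEq α] {x : α}
    {l : List α} (h : l.count x = 1) : ∃ s t, l = s ++ x :: t ∧ x ∉ s ∧ x ∉ t := by
  have hx : x ∈ l := List.count_pos_iff.mp (by omega)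
  obtain ⟨s, t, rfl⟩ := List.append_of_mem hx
  rw [List.count_append, List.count_cons_self] at h
  exact ⟨s, t, rfl, List.count_eq_zero.mp (by omega), List.count_eq_zero.mp (by omega)⟩

def PreservesIic (j : ℕ) (u : Equiv.Perm ℕ) : Prop := ∀ x, u x ≤ j ↔ x ≤ j

namespace PreservesIic

variable {j : ℕ} {u v : Equiv.Perm ℕ}

lemma mul (hu : PreservesIic j u) (hv : PreservesIic j v) : PreservesIic j (u * v) :=
  fun x => by rw [Equiv.Perm.mul_apply, hu, hv]

lemma inv (hu : PreservesIic j u) : PreservesIic j u⁻¹ :=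
  fun x => by simpa using (hu (u⁻¹ x)).symm

lemma pred_of_apply_eq (hu : PreservesIic j u) (hj : u j = j) : PreservesIic (j - 1) u :=
  fun x => by
    have := hu x
    have := u.injective.eq_iff (a := x) (b := j)
    rw [hj] at this
    omega

lemma succ_of_apply_eq (hu : PreservesIic j u) (hj : u (j + 1) = j + 1) :
    PreservesIic (j + 1) u :=
  fun x => by
    have := hu x
    have := u.injective.eq_iff (a := x) (b := j + 1)
    rw [hj] at this
    omega

lemma image_Icc_one (h₀ : PreservesIic 0 u) (hu : PreservesIic j u) :
    u '' Set.Icc 1 j = Set.Icc 1 j := by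
  ext y
  have := h₀.inv y
  have := hu.inv y
  rw [Set.mem_image_equiv, Set.mem_Icc, Set.mem_Icc, ← Equiv.Perm.inv_def]
  omega

lemma image_Icc_one_pred (h₀ : PreservesIic 0 u) (hu : PreservesIic j u) :
    u '' Set.Icc 1 (j - 1) = Set.Icc 1 j \ {u j} := by
  ext y
  have := h₀.inv y
  have := hu.inv y
  have : u⁻¹ y = j ↔ y = u j := Equiv.Perm.inv_eq_iff_eq
  rw [Set.mem_image_equiv, Set.mem_sdiff, Set.mem_Icc, Set.mem_Icc, Set.mem_singleton_iff,
    ← Equiv.Perm.inv_def]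
  omega

lemma image_Icc_one_succ (h₀ : PreservesIic 0 u) (hu : PreservesIic j u) :
    u '' Set.Icc 1 (j + 1) = Set.Icc 1 j ∪ {u (j + 1)} := by
  ext y
  have := h₀.inv y
  have := hu.inv y
  have : u⁻¹ y = j + 1 ↔ y = u (j + 1) := Equiv.Perm.inv_eq_iff_eq
  rw [Set.mem_image_equiv, Set.mem_union, Set.mem_Icc, Set.mem_Icc, Set.mem_singleton_iff,
    ← Equiv.Perm.inv_def]
  omega

end PreservesIic

lemma preservesIic_sigmaT {j x : ℕ} (h : x ≠ j) : PreservesIic j (sigmaT x) := fun y => by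
  simp only [sigmaT, Equiv.swap_apply_def]
  split_ifs <;> omega

lemma preservesIic_wordProd {j : ℕ} {s : List ℕ} (h : j ∉ s) :
    PreservesIic j (wordProd s) := by
  induction s with
  | nil => exact fun _ => Iff.rfl
  | cons x s ih =>
    rw [List.mem_cons, not_or] at h
    rw [wordProd_cons]
    exact (preservesIic_sigmaT (Ne.symm h.1)).mul (ih h.2)

lemma IsWord.preservesIic_zero {n : ℕ} {w : Equiv.Perm ℕ} {s : List ℕ} (h : IsWord n w s) :
    PreservesIic 0 w :=
  h.2 ▸ preservesIic_wordProd fun h0 => by have := (h.1 0 h0).1; omega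

/- `σ_x` keeps the relative order of any two values except `x` and `x + 1`, and exchanging
those two values of `u` is right multiplication by a transposition. -/
lemma sigmaT_mul_apply_lt_iff {x a b : ℕ} {u : Equiv.Perm ℕ}
    (h : sigmaT x * u ≠ u * Equiv.swap a b) :
    (sigmaT x * u) b < (sigmaT x * u) a ↔ u b < u a := by
  rcases eq_or_ne a b with rfl | hab
  · simp
  have hne : u a ≠ u b := u.injective.ne hab
  have hσ : sigmaT x ≠ Equiv.swap (u a) (u b) := fun hσ =>
    h (by rw [hσ, Equiv.swap_apply_apply, inv_mul_cancel_right])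
  have : ¬(u a = x ∧ u b = x + 1) := fun ⟨ha, hb⟩ => hσ (by rw [sigmaT, ha, hb])
  have : ¬(u a = x + 1 ∧ u b = x) := fun ⟨ha, hb⟩ =>
    hσ (by rw [sigmaT, ha, hb, Equiv.swap_comm])
  simp only [Equiv.Perm.mul_apply, sigmaT, Equiv.swap_apply_def]
  split_ifs <;> omega

lemma exists_append_cons_sigmaT_mul_eq_mul_swap {a b : ℕ} {m : Equiv.Perm ℕ} :
    ∀ {c : List ℕ}, ¬((wordProd c * m) b < (wordProd c * m) a ↔ m b < m a) →
      ∃ c₁ x c₂, c = c₁ ++ x :: c₂ ∧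
        sigmaT x * (wordProd c₂ * m) = wordProd c₂ * m * Equiv.swap a b
  | [], h => by simp [wordProd] at h
  | x :: c, h => by
    by_cases hc : (wordProd c * m) b < (wordProd c * m) a ↔ m b < m a
    · refine ⟨[], x, c, rfl, ?_⟩
      by_contra hx
      rw [wordProd_cons, mul_assoc, sigmaT_mul_apply_lt_iff hx] at h
      exact h hc
    · obtain ⟨c₁, y, c₂, rfl, hy⟩ := exists_append_cons_sigmaT_mul_eq_mul_swap hc
      exact ⟨x :: c₁, y, c₂, rfl, hy⟩

namespace IsReducedWord

variable {n j : ℕ} {w : Equiv.Perm ℕ} {s : List ℕ}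

/- Write `s = c ++ j :: d` with the last `j`. Then `σ_j` creates an inversion of `wordProd d`
which `w` no longer has, so some later letter of `c` undoes it; deleting both letters leaves a
shorter word for `w`. -/
lemma notMem_of_preservesIic (hs : IsReducedWord n w s) (hw : PreservesIic j w) : j ∉ s := by
  intro hj
  obtain ⟨⟨hletters, hprod⟩, hmin⟩ := hs
  obtain ⟨c, d, rfl, hjd⟩ : ∃ c d, s = c ++ j :: d ∧ j ∉ d := by
    obtain ⟨d', c', h, hjd'⟩ := List.eq_append_cons_of_mem (List.mem_reverse.mpr hj)
    exact ⟨c'.reverse, d'.reverse, by simpa using congrArg List.reverse h, by simpa using hjd'⟩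
  have hu : PreservesIic j (wordProd d) := preservesIic_wordProd hjd
  obtain ⟨a, hua⟩ := (wordProd d).surjective j
  obtain ⟨b, hub⟩ := (wordProd d).surjective (j + 1)
  have hσ : sigmaT j * wordProd d = wordProd d * Equiv.swap a b := by
    rw [sigmaT, ← hub, ← hua, Equiv.swap_apply_apply, inv_mul_cancel_right]
  have hw_split : w = wordProd c * (sigmaT j * wordProd d) := by
    rw [← hprod, wordProd_append, wordProd_cons]
  have hflip : ¬((wordProd c * (sigmaT j * wordProd d)) b <
      (wordProd c * (sigmaT j * wordProd d)) a ↔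
        (sigmaT j * wordProd d) b < (sigmaT j * wordProd d) a) := by
    have := (hw a).2 ((hu a).1 hua.le)
    have := (hw b).1
    have := (hu b).2
    rw [← hw_split, hσ, Equiv.Perm.mul_apply, Equiv.Perm.mul_apply, Equiv.swap_apply_left,
      Equiv.swap_apply_right]
    omega
  obtain ⟨c₁, x, c₂, rfl, hx⟩ := exists_append_cons_sigmaT_mul_eq_mul_swap hflip
  have hshort : IsWord n w (c₁ ++ c₂ ++ d) := by
    refine ⟨fun k hk => hletters k ?_, ?_⟩
    · simp only [List.mem_append, List.mem_cons] at hk ⊢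
      tauto
    · simp only [hw_split, wordProd_append, wordProd_cons, mul_assoc]
      rw [hx, hσ, mul_assoc, mul_assoc, Equiv.swap_mul_self, mul_one]
  have := hmin _ hshort
  simp only [List.length_append, List.length_cons] at this
  omega

lemma mem_of_mem_supp (hs : IsReducedWord n w s) (hj : j ∈ supp n w) : j ∈ s := by
  by_contra hjs
  obtain ⟨t, ht, hjt⟩ := hj
  exact ht.notMem_of_preservesIic (hs.1.2 ▸ preservesIic_wordProd hjs) hjt

lemma of_infix {m : List ℕ} (hs : IsReducedWord n w s) (hm : m <:+: s) :
    IsReducedWord n (wordProd m) m := by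
  obtain ⟨l₁, l₂, rfl⟩ := hm
  obtain ⟨⟨hletters, hprod⟩, hmin⟩ := hs
  refine ⟨⟨fun k hk => hletters k (by simp [hk]), rfl⟩, fun t ⟨ht, htm⟩ => ?_⟩
  have hword : IsWord n w (l₁ ++ t ++ l₂) := by
    refine ⟨fun k hk => ?_, by rw [← hprod, wordProd_append, wordProd_append, wordProd_append,
      wordProd_append, htm]⟩
    simp only [List.mem_append] at hk
    rcases hk with (hk | hk) | hk
    · exact hletters k (by simp [hk])
    · exact ht k hk
    · exact hletters k (by simp [hk])
  have := hmin _ hword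
  simp only [List.length_append] at this
  omega

lemma apply_lt_of_pred_mem (hs : IsReducedWord n w s) (hj : j ∉ s) (hpred : j - 1 ∈ s) :
    w j < j := by
  have hw : PreservesIic j w := hs.1.2 ▸ preservesIic_wordProd hj
  exact lt_of_le_of_ne ((hw j).2 le_rfl) fun he =>
    hs.notMem_of_preservesIic (hw.pred_of_apply_eq he) hpred

lemma lt_apply_succ_of_succ_mem (hs : IsReducedWord n w s) (hj : j ∉ s) (hsucc : j + 1 ∈ s) :
    j + 1 < w (j + 1) := by
  have hw : PreservesIic j w := hs.1.2 ▸ preservesIic_wordProd hj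
  have hgt : ¬w (j + 1) ≤ j := fun h => by have := (hw _).1 h; omega
  exact lt_of_le_of_ne (by omega) fun he =>
    hs.notMem_of_preservesIic (hw.succ_of_apply_eq he.symm) hsucc

end IsReducedWord

def HasPatternA (w : Equiv.Perm ℕ) (i : ℕ) : Prop :=
  w i < i ∧ w (i + 1) = i ∧
    ∃ y : ℕ, i + 1 < y ∧ (⇑w) '' Set.Icc 1 (i + 1) = Set.Icc 1 i ∪ {y}

def HasPatternB (w : Equiv.Perm ℕ) (i : ℕ) : Prop :=
  w i = i + 1 ∧ i + 1 < w (i + 1) ∧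
    ∃ a : ℕ, a ≤ i - 1 ∧ (⇑w) '' Set.Icc 1 (i - 1) = Set.Icc 1 i \ {a}

def HasPatternC (w : Equiv.Perm ℕ) (i : ℕ) : Prop :=
  w i < i ∧ i + 1 < w (i + 1) ∧
    (⇑w) '' Set.Icc 1 (i - 1) = (Set.Icc 1 (i - 1) \ {w i}) ∪ {i + 1}

def HasPatternD (w : Equiv.Perm ℕ) (i : ℕ) : Prop :=
  i + 1 < w i ∧ w (i + 1) < i ∧
    (⇑w) '' Set.Icc 1 (i - 1) = (Set.Icc 1 (i - 1) \ {w (i + 1)}) ∪ {i}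

section Patterns

variable {i : ℕ} {A B : Equiv.Perm ℕ}

lemma image_mul_sigmaT_mul (S : Set ℕ) :
    ⇑(A * sigmaT i * B) '' S = A '' (sigmaT i '' (B '' S)) := by
  simp only [Equiv.Perm.coe_mul, Set.image_comp]

lemma sigmaT_apply_of_lt {x : ℕ} (h : x < i) : sigmaT i x = x :=
  Equiv.swap_apply_of_ne_of_ne (by omega) (by omega)

lemma sigmaT_apply_of_succ_lt {x : ℕ} (h : i + 1 < x) : sigmaT i x = x :=
  Equiv.swap_apply_of_ne_of_ne (by omega) (by omega)

lemma hasPatternA_mul_sigmaT_mul (hA₀ : PreservesIic 0 A) (hApred : PreservesIic (i - 1) A)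
    (hA : PreservesIic i A) (hAgt : i + 1 < A (i + 1)) (hB₀ : PreservesIic 0 B)
    (hB : PreservesIic i B) (hBsucc : PreservesIic (i + 1) B) (hBlt : B i < i) :
    HasPatternA (A * sigmaT i * B) i := by
  have hAi : A i = i := by have := hApred i; have := hA i; omega
  have hBi1 : B (i + 1) = i + 1 := by have := hB (i + 1); have := hBsucc (i + 1); omega
  have hσ₀ : PreservesIic 0 (sigmaT i) := preservesIic_sigmaT (by omega)
  have hσsucc : PreservesIic (i + 1) (sigmaT i) := preservesIic_sigmaT (by omega)
  refine ⟨?_, ?_, A (i + 1), hAgt, ?_⟩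
  · have := (hApred (B i)).2 (by omega)
    simp only [Equiv.Perm.mul_apply, sigmaT_apply_of_lt hBlt]
    omega
  · simp only [Equiv.Perm.mul_apply, hBi1, sigmaT, Equiv.swap_apply_right, hAi]
  · rw [image_mul_sigmaT_mul, hB₀.image_Icc_one hBsucc, hσ₀.image_Icc_one hσsucc,
      hA₀.image_Icc_one_succ hA]

lemma hasPatternB_mul_sigmaT_mul (hA₀ : PreservesIic 0 A) (hA : PreservesIic i A)
    (hAsucc : PreservesIic (i + 1) A) (hAlt : A i < i) (hB₀ : PreservesIic 0 B)
    (hBpred : PreservesIic (i - 1) B) (hB : PreservesIic i B) (hBgt : i + 1 < B (i + 1)) :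
    HasPatternB (A * sigmaT i * B) i := by
  have hAi1 : A (i + 1) = i + 1 := by have := hA (i + 1); have := hAsucc (i + 1); omega
  have hBi : B i = i := by have := hBpred i; have := hB i; omega
  have hσ₀ : PreservesIic 0 (sigmaT i) := preservesIic_sigmaT (by omega)
  have hσpred : PreservesIic (i - 1) (sigmaT i) := preservesIic_sigmaT (by omega)
  refine ⟨?_, ?_, A i, by omega, ?_⟩
  · simp only [Equiv.Perm.mul_apply, hBi, sigmaT, Equiv.swap_apply_left, hAi1]
  · have := (hAsucc (B (i + 1))).1
    simp only [Equiv.Perm.mul_apply, sigmaT_apply_of_succ_lt hBgt]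
    omega
  · rw [image_mul_sigmaT_mul, hB₀.image_Icc_one hBpred, hσ₀.image_Icc_one hσpred,
      hA₀.image_Icc_one_pred hA]

lemma hasPatternC_mul_sigmaT_mul (hA₀ : PreservesIic 0 A) (hApred : PreservesIic (i - 1) A)
    (hA : PreservesIic i A) (hAsucc : PreservesIic (i + 1) A) (hB₀ : PreservesIic 0 B)
    (hB : PreservesIic i B) (hBlt : B i < i) (hBgt : i + 1 < B (i + 1)) :
    HasPatternC (A * sigmaT i * B) i := by
  have hAi1 : A (i + 1) = i + 1 := by have := hA (i + 1); have := hAsucc (i + 1); omega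
  have hσ₀ : PreservesIic 0 (sigmaT i) := preservesIic_sigmaT (by omega)
  have hσpred : PreservesIic (i - 1) (sigmaT i) := preservesIic_sigmaT (by omega)
  have hwi : (A * sigmaT i * B) i = A (B i) := by
    simp only [Equiv.Perm.mul_apply, sigmaT_apply_of_lt hBlt]
  refine ⟨?_, ?_, ?_⟩
  · have := (hApred (B i)).2 (by omega)
    omega
  · have := (hAsucc (B (i + 1))).1
    simp only [Equiv.Perm.mul_apply, sigmaT_apply_of_succ_lt hBgt]
    omega
  · have hσ : sigmaT i '' (Set.Icc 1 i \ {B i}) = (Set.Icc 1 (i - 1) \ {B i}) ∪ {i + 1} := by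
      have hIcc : Set.Icc 1 i = Set.Icc 1 (i - 1) ∪ {i} := by
        ext x
        simp only [Set.mem_Icc, Set.mem_union, Set.mem_singleton_iff]
        omega
      rw [Set.image_sdiff (sigmaT i).injective, Set.image_singleton, sigmaT_apply_of_lt hBlt,
        hIcc, Set.image_union, hσ₀.image_Icc_one hσpred, Set.image_singleton, sigmaT,
        Equiv.swap_apply_left]
      ext x
      simp only [Set.mem_Icc, Set.mem_sdiff, Set.mem_union, Set.mem_singleton_iff]
      omega
    rw [image_mul_sigmaT_mul, hB₀.image_Icc_one_pred hB, hσ, Set.image_union,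
      Set.image_sdiff A.injective, hA₀.image_Icc_one hApred, Set.image_singleton,
      Set.image_singleton, hAi1, hwi]

lemma hasPatternD_mul_sigmaT_mul (hA₀ : PreservesIic 0 A) (hA : PreservesIic i A)
    (hAlt : A i < i) (hAgt : i + 1 < A (i + 1)) (hB₀ : PreservesIic 0 B)
    (hBpred : PreservesIic (i - 1) B) (hB : PreservesIic i B)
    (hBsucc : PreservesIic (i + 1) B) : HasPatternD (A * sigmaT i * B) i := by
  have hBi : B i = i := by have := hBpred i; have := hB i; omega
  have hBi1 : B (i + 1) = i + 1 := by have := hB (i + 1); have := hBsucc (i + 1); omega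
  have hσ₀ : PreservesIic 0 (sigmaT i) := preservesIic_sigmaT (by omega)
  have hσpred : PreservesIic (i - 1) (sigmaT i) := preservesIic_sigmaT (by omega)
  have hwi1 : (A * sigmaT i * B) (i + 1) = A i := by
    simp only [Equiv.Perm.mul_apply, hBi1, sigmaT, Equiv.swap_apply_right]
  refine ⟨?_, by omega, ?_⟩
  · simpa only [Equiv.Perm.mul_apply, hBi, sigmaT, Equiv.swap_apply_left] using hAgt
  · rw [image_mul_sigmaT_mul, hB₀.image_Icc_one hBpred, hσ₀.image_Icc_one hσpred,
      hA₀.image_Icc_one_pred hA, hwi1]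
    ext x
    simp only [Set.mem_Icc, Set.mem_sdiff, Set.mem_union, Set.mem_singleton_iff]
    omega

end Patterns

theorem hasPattern_of_isReducedWord_append_cons {n i : ℕ} {w : Equiv.Perm ℕ} {a b : List ℕ}
    (hs : IsReducedWord n w (a ++ i :: b)) (hia : i ∉ a) (hib : i ∉ b)
    (hpred : i - 1 ∈ a ++ i :: b) (hsucc : i + 1 ∈ a ++ i :: b)
    (hpred' : ¬(i - 1 ∈ a ∧ i - 1 ∈ b)) (hsucc' : ¬(i + 1 ∈ a ∧ i + 1 ∈ b)) :
    HasPatternA w i ∨ HasPatternB w i ∨ HasPatternC w i ∨ HasPatternD w i := by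
  have ha : IsReducedWord n (wordProd a) a := hs.of_infix (List.prefix_append a _).isInfix
  have hb : IsReducedWord n (wordProd b) b :=
    hs.of_infix ((List.suffix_cons i b).trans (List.suffix_append a _)).isInfix
  have hi : 1 ≤ i := (hs.1.1 i (by simp)).1
  obtain rfl : w = wordProd a * sigmaT i * wordProd b := by
    rw [← hs.1.2, wordProd_append, wordProd_cons, mul_assoc]
  have hA₀ := ha.1.preservesIic_zero
  have hB₀ := hb.1.preservesIic_zero
  have hA := preservesIic_wordProd hia
  have hB := preservesIic_wordProd hib
  rw [List.mem_append, List.mem_cons] at hpred hsucc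
  rcases hpred with hpa | hpi | hpb <;> try omega
  all_goals rcases hsucc with hsa | hsi | hsb <;> try omega
  · exact .inr <| .inr <| .inr <| hasPatternD_mul_sigmaT_mul hA₀ hA
      (ha.apply_lt_of_pred_mem hia hpa) (ha.lt_apply_succ_of_succ_mem hia hsa) hB₀
      (preservesIic_wordProd fun h => hpred' ⟨hpa, h⟩) hB
      (preservesIic_wordProd fun h => hsucc' ⟨hsa, h⟩)
  · exact .inr <| .inl <| hasPatternB_mul_sigmaT_mul hA₀ hA
      (preservesIic_wordProd fun h => hsucc' ⟨h, hsb⟩) (ha.apply_lt_of_pred_mem hia hpa) hB₀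
      (preservesIic_wordProd fun h => hpred' ⟨hpa, h⟩) hB (hb.lt_apply_succ_of_succ_mem hib hsb)
  · exact .inl <| hasPatternA_mul_sigmaT_mul hA₀
      (preservesIic_wordProd fun h => hpred' ⟨h, hpb⟩) hA (ha.lt_apply_succ_of_succ_mem hia hsa)
      hB₀ hB
      (preservesIic_wordProd fun h => hsucc' ⟨hsa, h⟩) (hb.apply_lt_of_pred_mem hib hpb)
  · exact .inr <| .inr <| .inl <| hasPatternC_mul_sigmaT_mul hA₀
      (preservesIic_wordProd fun h => hpred' ⟨h, hpb⟩) hA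
      (preservesIic_wordProd fun h => hsucc' ⟨h, hsb⟩) hB₀ hB
      (hb.apply_lt_of_pred_mem hib hpb) (hb.lt_apply_succ_of_succ_mem hib hsb)

theorem prism_nearby_support_general (n : ℕ) (w : Equiv.Perm ℕ) (i : ℕ)
    (hi : i ∈ supp n w)
    (hu : ∀ s : List ℕ, IsReducedWord n w s → Unconfined i s)
    (hbelow : i - 1 ∈ supp n w) (habove : i + 1 ∈ supp n w) :
    (w i < i ∧ w (i + 1) = i ∧
      ∃ y : ℕ, i + 1 < y ∧ (⇑w) '' Set.Icc 1 (i + 1) = Set.Icc 1 i ∪ {y}) ∨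
    (w i = i + 1 ∧ i + 1 < w (i + 1) ∧
      ∃ a : ℕ, a ≤ i - 1 ∧ (⇑w) '' Set.Icc 1 (i - 1) = Set.Icc 1 i \ {a}) ∨
    (w i < i ∧ i + 1 < w (i + 1) ∧
      (⇑w) '' Set.Icc 1 (i - 1) = (Set.Icc 1 (i - 1) \ {w i}) ∪ {i + 1}) ∨
    (i + 1 < w i ∧ w (i + 1) < i ∧
      (⇑w) '' Set.Icc 1 (i - 1) = (Set.Icc 1 (i - 1) \ {w (i + 1)}) ∪ {i}) := by
  obtain ⟨s, hs, -⟩ := hi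
  obtain ⟨hcount, hconfined⟩ := hu s hs
  obtain ⟨a, b, rfl, hia, hib⟩ := exists_eq_append_cons_of_count_eq_one hcount
  obtain ⟨hsucc', hpred'⟩ := hconfined a b rfl
  exact hasPattern_of_isReducedWord_append_cons hs hia hib (hs.mem_of_mem_supp hbelow)
    (hs.mem_of_mem_supp habove) hpred' hsucc'

/-- a prism with unconfined i and i±1 ∈ supp(w) contains one of the four
calibrated patterns (one-line-notation rendering). -/
theorem prism_nearby_support (n : ℕ) (w : Equiv.Perm ℕ) (hw : MemSymm n w) (i : ℕ)
    (hprism : IsPrism n w) (hi : i ∈ supp n w)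
    (hu : ∀ s : List ℕ, IsReducedWord n w s → Unconfined i s)
    (hbelow : i - 1 ∈ supp n w) (habove : i + 1 ∈ supp n w) :
    (w i < i ∧ w (i + 1) = i ∧
      ∃ y : ℕ, i + 1 < y ∧ (⇑w) '' Set.Icc 1 (i + 1) = Set.Icc 1 i ∪ {y}) ∨
    (w i = i + 1 ∧ i + 1 < w (i + 1) ∧
      ∃ a : ℕ, a ≤ i - 1 ∧ (⇑w) '' Set.Icc 1 (i - 1) = Set.Icc 1 i \ {a}) ∨
    (w i < i ∧ i + 1 < w (i + 1) ∧
      (⇑w) '' Set.Icc 1 (i - 1) = (Set.Icc 1 (i - 1) \ {w i}) ∪ {i + 1}) ∨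
    (i + 1 < w i ∧ w (i + 1) < i ∧
      (⇑w) '' Set.Icc 1 (i - 1) = (Set.Icc 1 (i - 1) \ {w (i + 1)}) ∪ {i}) :=
  prism_nearby_support_general n w i hi hu hbelow habove
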